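/- There exist absolute constants C > 0 and δ > 0 with the following property. Let n ≥ 3, r ≥ 3, let k = (k_1,…,k_n) be a sequence of non-negative integers, and let G* be a simple r-uniform hypergraph on V with degree sequence k containing the edge e_i. If r^4·k_max^3 ≤ δ·M(k), then the number N of 6-tuples in S*(G*,e_i) whose forward switching is legal satisfies |N − r(r−1)·M(k)^2| ≤ C·r(r−1)·M(k)^2·(k_max^2 + r·k_max)/M(k). -/

import Mathlib

/-- `H` is a simple `r`-uniform hypergraph on `Fin n`: a set of `r`-element subsets. -/
def isUniform (n r : ℕ) (H : Finset (Finset (Fin n))) : Prop :=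
  ∀ e ∈ H, e.card = r

/-- The degree of vertex `v` in the hypergraph `H`. -/
def hDeg (n : ℕ) (H : Finset (Finset (Fin n))) (v : Fin n) : ℕ :=
  (H.filter fun e => v ∈ e).card

/-- Membership predicate for the set `S*(G*, e_i)` of 6-tuples
`(z₁, z₂, y₁, y₂, f₁, f₂)`. -/
def SstarMem (n : ℕ) (Gs : Finset (Finset (Fin n))) (ei f1 f2 : Finset (Fin n))
    (z1 z2 y1 y2 : Fin n) : Prop :=
  z1 ≠ z2 ∧ z1 ≠ y1 ∧ z1 ≠ y2 ∧ z2 ≠ y1 ∧ z2 ≠ y2 ∧ y1 ≠ y2 ∧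
  f1 ∈ Gs ∧ f2 ∈ Gs ∧ ei ≠ f1 ∧ ei ≠ f2 ∧ f1 ≠ f2 ∧
  z1 ∈ ei ∧ z2 ∈ ei ∧ y1 ∈ f1 ∧ y2 ∈ f2

/-- The set `S*(G*, e_i)` of 6-tuples `(z₁, z₂, y₁, y₂, f₁, f₂)`. -/
def Sstar (n : ℕ) (Gs : Finset (Finset (Fin n))) (ei : Finset (Fin n)) :
    Set (Fin n × Fin n × Fin n × Fin n × Finset (Fin n) × Finset (Fin n)) :=
  {p | SstarMem n Gs ei p.2.2.2.2.1 p.2.2.2.2.2 p.1 p.2.1 p.2.2.1 p.2.2.2.1}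

/-- The multiset of vertex multisets obtained from `G*` by the forward switching
determined by `(z₁, z₂, y₁, y₂, f₁, f₂)`: the edges `e_i, f₁, f₂` are replaced by
`g = (e_i ∖ {z₁,z₂}) ∪ {y₁,y₂}` and `g_j = (f_j ∖ {y_j}) ∪ {z_j}` for `j = 1,2`. -/
def fwdResult (n : ℕ) (Gs : Finset (Finset (Fin n))) (ei f1 f2 : Finset (Fin n))
    (z1 z2 y1 y2 : Fin n) : Multiset (Multiset (Fin n)) :=
  (Gs.val.map Finset.val - {ei.val, f1.val, f2.val}) +
    {ei.val - {z1, z2} + {y1, y2}, f1.val - {y1} + {z1}, f2.val - {y2} + {z2}}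

/-- The forward switching is legal when the result is again a simple hypergraph
(no repeated vertex within an edge, no repeated edge) not containing `e_i`. -/
def fwdLegal (n : ℕ) (Gs : Finset (Finset (Fin n))) (ei f1 f2 : Finset (Fin n))
    (z1 z2 y1 y2 : Fin n) : Prop :=
  (fwdResult n Gs ei f1 f2 z1 z2 y1 y2).Nodup ∧
  (∀ m ∈ fwdResult n Gs ei f1 f2 z1 z2 y1 y2, m.Nodup) ∧
  ei.val ∉ fwdResult n Gs ei f1 f2 z1 z2 y1 y2

/-- `M(k)`, the sum of the degrees. -/
def Mk (n : ℕ) (k : Fin n → ℕ) : ℕ := ∑ v, k v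

/-- `k_max`, the maximum degree. -/
def kmax (n : ℕ) (k : Fin n → ℕ) : ℕ := Finset.univ.sup k

/-!
Encode a tuple as a pair `(z₁, z₂)` of distinct vertices of `e_i` together with two incidences
`(y₁, f₁)`, `(y₂, f₂)` of `G*`; there are exactly `r (r - 1) M²` of these, and they contain every
tuple of `S*(G*, e_i)`. Such a tuple lies in `S*(G*, e_i)` and switches legally unless a vertex is
moved into an edge that already contains it, or one of the new edges `g, g₁, g₂` is already an
edge of `G*`. With `(z₁, z₂)` and one incidence fixed, each of these events leaves at most `r k_max`
or `k_max²` choices for the other incidence: a new edge passes through a vertex that is known in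
advance, and it then determines the vertex that was exchanged. Hence at most
`r (r - 1) M (8 r k_max + 3 k_max²)` tuples fail.
-/

open Finset

namespace Multiset

theorem nodup_sub_add {α : Type*} [DecidableEq α] {s u : Multiset α} (t : Multiset α)
    (hs : s.Nodup) (hu : u.Nodup) (h : ∀ a ∈ u, a ∉ s) : (s - t + u).Nodup :=
  nodup_add.2 ⟨nodup_of_le (Multiset.sub_le_self s t) hs, hu,
    disjoint_left.2 fun ha hau => h _ hau (mem_of_le (Multiset.sub_le_self s t) ha)⟩

end Multiset

namespace Finset

variable {α β : Type*}

theorem mem_val_sub [DecidableEq α] {s : Finset α} {t : Multiset α} {a : α} :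
    a ∈ s.val - t ↔ a ∈ s ∧ a ∉ t :=
  Multiset.mem_sub_of_nodup s.nodup

theorem eq_of_val_sub_add_eq [DecidableEq α] {f : Finset α} {a b z : α} (ha : a ∈ f)
    (hb : b ∈ f) (h : f.val - {a} + {z} = f.val - {b} + {z}) : a = b :=
  f.erase_injOn ha hb (val_inj.1 (by simpa using h))

theorem card_filter_or_le [DecidableEq α] (s : Finset α) (p q : α → Prop) [DecidablePred p]
    [DecidablePred q] : #{a ∈ s | p a ∨ q a} ≤ #{a ∈ s | p a} + #{a ∈ s | q a} := by
  rw [filter_or]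
  exact card_union_le _ _

theorem card_filter_product_le_left {s : Finset α} {t : Finset β} {p : α × β → Prop}
    [DecidablePred p] {c : ℕ} (h : ∀ a ∈ s, #{b ∈ t | p (a, b)} ≤ c) :
    #{x ∈ s ×ˢ t | p x} ≤ #s * c := by
  rw [card_filter, sum_product, ← smul_eq_mul]
  exact sum_le_card_nsmul _ _ _ fun a ha => (card_filter _ _).symm.trans_le (h a ha)

theorem card_filter_product_le_right {s : Finset α} {t : Finset β} {p : α × β → Prop}
    [DecidablePred p] {c : ℕ} (h : ∀ b ∈ t, #{a ∈ s | p (a, b)} ≤ c) :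
    #{x ∈ s ×ˢ t | p x} ≤ #t * c := by
  rw [card_filter, sum_product_right, ← smul_eq_mul]
  exact sum_le_card_nsmul _ _ _ fun b hb => (card_filter _ _).symm.trans_le (h b hb)

end Finset

section Incidences

variable {n r : ℕ} {H : Finset (Finset (Fin n))} {k : Fin n → ℕ}

def incidences (H : Finset (Finset (Fin n))) : Finset (Fin n × Finset (Fin n)) :=
  {q | q.2 ∈ H ∧ q.1 ∈ q.2}

@[simp]
theorem mem_incidences {q : Fin n × Finset (Fin n)} :
    q ∈ incidences H ↔ q.2 ∈ H ∧ q.1 ∈ q.2 := by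
  simp [incidences]

theorem card_incidences_filter_fst_eq (v : Fin n) :
    #{q ∈ incidences H | q.1 = v} = hDeg n H v := by
  refine card_nbij' Prod.snd (fun e => (v, e)) ?_ ?_ ?_ ?_ <;> intro q <;> simp <;> grind

theorem card_incidences (hdeg : ∀ v, hDeg n H v = k v) : #(incidences H) = Mk n k := by
  rw [card_eq_sum_card_fiberwise (f := Prod.fst) (t := univ) fun _ _ => mem_univ _, Mk]
  exact sum_congr rfl fun v _ => (card_incidences_filter_fst_eq v).trans (hdeg v)

theorem hDeg_le_kmax (hdeg : ∀ v, hDeg n H v = k v) (v : Fin n) : hDeg n H v ≤ kmax n k :=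
  hdeg v ▸ le_sup (mem_univ v)

theorem card_le_kmax_of_fst_eq (hdeg : ∀ v, hDeg n H v = k v)
    {s : Finset (Fin n × Finset (Fin n))} (hs : s ⊆ incidences H)
    (h : ∀ q ∈ s, ∀ q' ∈ s, q.1 = q'.1) : #s ≤ kmax n k := by
  obtain rfl | ⟨q₀, hq₀⟩ := s.eq_empty_or_nonempty
  · simp
  calc #s ≤ #{q ∈ incidences H | q.1 = q₀.1} :=
        card_le_card fun q hq => mem_filter.2 ⟨hs hq, h q hq q₀ hq₀⟩
    _ ≤ kmax n k := (card_incidences_filter_fst_eq _).trans_le (hDeg_le_kmax hdeg _)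

theorem card_incidences_filter_fst_mem_le (hdeg : ∀ v, hDeg n H v = k v) (s : Finset (Fin n)) :
    #{q ∈ incidences H | q.1 ∈ s} ≤ #s * kmax n k := by
  rw [mul_comm]
  refine card_le_mul_card_image_of_maps_to (f := Prod.fst) (fun q hq => (mem_filter.1 hq).2) _
    fun v _ => ?_
  rw [filter_filter]
  refine (card_le_card fun q hq => ?_).trans
    ((card_incidences_filter_fst_eq v).trans_le (hDeg_le_kmax hdeg v))
  simp only [mem_filter] at hq ⊢
  exact ⟨hq.1, hq.2.2⟩

theorem card_incidences_filter_mem_snd_le (hu : isUniform n r H) (hdeg : ∀ v, hDeg n H v = k v)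
    (v : Fin n) : #{q ∈ incidences H | v ∈ q.2} ≤ r * kmax n k := by
  calc #{q ∈ incidences H | v ∈ q.2} ≤ r * #{e ∈ H | v ∈ e} := by
        refine card_le_mul_card_image_of_maps_to (f := Prod.snd) (fun q hq => ?_) _ fun e he => ?_
        · simp only [mem_filter, mem_incidences] at hq ⊢
          exact ⟨hq.1.1, hq.2⟩
        rw [filter_filter, ← hu e (mem_filter.1 he).1]
        refine card_le_card_of_injOn Prod.fst (fun q hq => ?_) fun q hq q' hq' h => ?_
        · simp only [coe_filter, mem_incidences, Set.mem_ofPred_eq] at hq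
          exact hq.2.2 ▸ hq.1.2
        · simp only [coe_filter, Set.mem_ofPred_eq] at hq hq'
          exact Prod.ext h (hq.2.2.trans hq'.2.2.symm)
    _ ≤ r * kmax n k := Nat.mul_le_mul_left r (hDeg_le_kmax hdeg v)

theorem card_filter_mem_edges_le {α : Type*} [DecidableEq α] (hdeg : ∀ v, hDeg n H v = k v)
    (s : Finset α) (g : α → Multiset (Fin n)) (w : Fin n) (c : ℕ) (hw : ∀ q ∈ s, w ∈ g q)
    (hfib : ∀ e ∈ H, w ∈ e → #{q ∈ s | g q = e.val} ≤ c) :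
    #{q ∈ s | g q ∈ H.val.map Finset.val} ≤ c * kmax n k := by
  calc #{q ∈ s | g q ∈ H.val.map Finset.val} ≤ c * #{e ∈ H | w ∈ e} := by
        refine card_le_mul_card_image_of_maps_to (f := fun q => (g q).toFinset)
          (fun q hq => ?_) _ fun e he => ?_
        · obtain ⟨hqs, e, he, hge⟩ := by simpa using hq
          have := hw q hqs
          rw [← hge] at this ⊢
          simpa [he] using this
        · obtain ⟨heH, hwe⟩ := mem_filter.1 he
          refine (card_le_card fun q hq => ?_).trans (hfib e heH hwe)
          obtain ⟨⟨hqs, e', he', hge'⟩, hqe⟩ := by simpa using hq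
          rw [← hge', val_toFinset] at hqe
          exact mem_filter.2 ⟨hqs, hqe ▸ hge'.symm⟩
    _ ≤ c * kmax n k := Nat.mul_le_mul_left c (hDeg_le_kmax hdeg w)

theorem card_filter_replace_mem_edges_le (hu : isUniform n r H) (hdeg : ∀ v, hDeg n H v = k v)
    (hr : 2 ≤ r) (z : Fin n) :
    #{i ∈ incidences H | i.2.val - {i.1} + {z} ∈ H.val.map Finset.val} ≤ kmax n k ^ 2 := by
  rw [sq]
  refine card_filter_mem_edges_le hdeg _ _ z _ (fun i _ => by simp) fun e he _ => ?_
  -- The old edge `i.2` passes through a vertex `w ≠ z` of the new edge `e`, and determines `i.1`.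
  obtain ⟨w, hwe, hwz⟩ := exists_mem_ne (by rw [hu e he]; omega) z
  calc #{i ∈ incidences H | i.2.val - {i.1} + {z} = e.val} ≤ #{f ∈ H | w ∈ f} := by
        refine card_le_card_of_injOn Prod.snd (fun i hi => ?_) fun i hi i' hi' hii' => ?_
        · simp only [coe_filter, mem_incidences, Set.mem_ofPred_eq] at hi
          have hwi : w ∈ i.2.val - {i.1} + {z} := hi.2 ▸ hwe
          simp only [Multiset.mem_add, mem_val_sub, Multiset.mem_singleton] at hwi
          exact mem_filter.2 ⟨hi.1.1, by tauto⟩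
        · simp only [coe_filter, mem_incidences, Set.mem_ofPred_eq] at hi hi'
          refine Prod.ext (eq_of_val_sub_add_eq (z := z) hi.1.2 (hii' ▸ hi'.1.2) ?_) hii'
          rw [hi.2, ← hi'.2, hii']
    _ ≤ kmax n k := hDeg_le_kmax hdeg w

theorem card_filter_exchange_mem_edges_le {ei : Finset (Fin n)} (hdeg : ∀ v, hDeg n H v = k v)
    (hei : 3 ≤ #ei) (z₁ z₂ y₁ : Fin n) :
    #{j ∈ incidences H | ei.val - {z₁, z₂} + {y₁, j.1} ∈ H.val.map Finset.val} ≤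
      kmax n k ^ 2 := by
  obtain ⟨w, hwe, hwz⟩ := exists_mem_notMem_of_card_lt_card
    ((card_le_two (a := z₁) (b := z₂)).trans_lt hei)
  rw [sq]
  refine card_filter_mem_edges_le hdeg _ _ w _ (fun j _ => ?_) fun e _ _ => ?_
  · simp only [Multiset.mem_add, mem_val_sub]
    exact Or.inl ⟨hwe, by simpa using hwz⟩
  -- Cancelling the common part of the new edge recovers `j.1`.
  refine card_le_kmax_of_fst_eq hdeg (filter_subset _ _) fun j hj j' hj' => ?_
  have h := (mem_filter.1 hj).2.trans (mem_filter.1 hj').2.symm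
  rwa [add_right_inj, Multiset.insert_eq_cons, Multiset.insert_eq_cons, Multiset.cons_inj_right,
    Multiset.singleton_inj] at h

end Incidences

section Switchings

variable {n r : ℕ} {H : Finset (Finset (Fin n))} {ei : Finset (Fin n)} {k : Fin n → ℕ}

/-- The tuple `(z₁, z₂, y₁, y₂, f₁, f₂)` is stored as `((z₁, z₂), (y₁, f₁), (y₂, f₂))`; this is
`S*(G*, e_i)` without its distinctness conditions. -/
def switchings (H : Finset (Finset (Fin n))) (ei : Finset (Fin n)) :
    Finset ((Fin n × Fin n) × (Fin n × Finset (Fin n)) × (Fin n × Finset (Fin n))) :=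
  ei.offDiag ×ˢ incidences H ×ˢ incidences H

theorem card_switchings (hu : isUniform n r H) (hdeg : ∀ v, hDeg n H v = k v) (hei : ei ∈ H) :
    #(switchings H ei) = r * (r - 1) * Mk n k ^ 2 := by
  rw [switchings, card_product, card_product, offDiag_card, card_incidences hdeg, hu ei hei,
    Nat.mul_sub_one, sq]

theorem card_filter_switchings_le_of_forall_second (hu : isUniform n r H)
    (hdeg : ∀ v, hDeg n H v = k v) (hei : ei ∈ H)
    {P : (Fin n × Fin n) × (Fin n × Finset (Fin n)) × (Fin n × Finset (Fin n)) → Prop}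
    [DecidablePred P] {c : ℕ}
    (h : ∀ z ∈ ei.offDiag, ∀ i ∈ incidences H, #{j ∈ incidences H | P (z, i, j)} ≤ c) :
    #{x ∈ switchings H ei | P x} ≤ r * (r - 1) * (Mk n k * c) := by
  rw [Nat.mul_sub_one, ← hu ei hei, ← card_incidences hdeg, ← offDiag_card]
  exact card_filter_product_le_left fun z hz => card_filter_product_le_left (h z hz)

theorem card_filter_switchings_le_of_forall_first (hu : isUniform n r H)
    (hdeg : ∀ v, hDeg n H v = k v) (hei : ei ∈ H)
    {P : (Fin n × Fin n) × (Fin n × Finset (Fin n)) × (Fin n × Finset (Fin n)) → Prop}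
    [DecidablePred P] {c : ℕ}
    (h : ∀ z ∈ ei.offDiag, ∀ j ∈ incidences H, #{i ∈ incidences H | P (z, i, j)} ≤ c) :
    #{x ∈ switchings H ei | P x} ≤ r * (r - 1) * (Mk n k * c) := by
  rw [Nat.mul_sub_one, ← hu ei hei, ← card_incidences hdeg, ← offDiag_card]
  exact card_filter_product_le_left fun z hz => card_filter_product_le_right (h z hz)

/-- The ways in which the half `f₁ ↦ g₁ = f₁ - y₁ + z₁` of the switching at
`(z, i, j) = ((z₁, z₂), (y₁, f₁), (y₂, f₂))` can spoil it; the half `f₂ ↦ g₂` is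
`Clash H ei z.swap j i`. -/
def Clash (H : Finset (Finset (Fin n))) (ei : Finset (Fin n)) (z : Fin n × Fin n)
    (i j : Fin n × Finset (Fin n)) : Prop :=
  i.1 ∈ ei ∨ z.1 ∈ i.2 ∨ z.2 ∈ i.2 ∨ j.1 ∈ i.2 ∨ i.2.val - {i.1} + {z.1} ∈ H.val.map Finset.val

instance (z : Fin n × Fin n) (i j : Fin n × Finset (Fin n)) : Decidable (Clash H ei z i j) := by
  unfold Clash; infer_instance

def Blocked (H : Finset (Finset (Fin n))) (ei : Finset (Fin n))
    (x : (Fin n × Fin n) × (Fin n × Finset (Fin n)) × (Fin n × Finset (Fin n))) : Prop :=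
  Clash H ei x.1 x.2.1 x.2.2 ∨ Clash H ei x.1.swap x.2.2 x.2.1 ∨
    ei.val - {x.1.1, x.1.2} + {x.2.1.1, x.2.2.1} ∈ H.val.map Finset.val

instance : DecidablePred (Blocked H ei) := by
  unfold Blocked; infer_instance

theorem card_filter_clash_le (hu : isUniform n r H) (hdeg : ∀ v, hDeg n H v = k v)
    (hei : ei ∈ H) (hr : 2 ≤ r) (z : Fin n × Fin n) (j : Fin n × Finset (Fin n)) :
    #{i ∈ incidences H | Clash H ei z i j} ≤ 4 * (r * kmax n k) + kmax n k ^ 2 := by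
  have hy := card_incidences_filter_fst_mem_le hdeg ei
  rw [hu ei hei] at hy
  have hz₁ := card_incidences_filter_mem_snd_le hu hdeg z.1
  have hz₂ := card_incidences_filter_mem_snd_le hu hdeg z.2
  have hj := card_incidences_filter_mem_snd_le hu hdeg j.1
  have hg := card_filter_replace_mem_edges_le hu hdeg hr z.1
  calc #{i ∈ incidences H | Clash H ei z i j}
      ≤ r * kmax n k + (r * kmax n k + (r * kmax n k + (r * kmax n k + kmax n k ^ 2))) := by
        unfold Clash
        refine (card_filter_or_le _ _ _).trans (add_le_add hy ?_)
        refine (card_filter_or_le _ _ _).trans (add_le_add hz₁ ?_)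
        refine (card_filter_or_le _ _ _).trans (add_le_add hz₂ ?_)
        exact (card_filter_or_le _ _ _).trans (add_le_add hj hg)
    _ = 4 * (r * kmax n k) + kmax n k ^ 2 := by ring

theorem card_filter_blocked_le (hu : isUniform n r H) (hdeg : ∀ v, hDeg n H v = k v)
    (hei : ei ∈ H) (hr : 3 ≤ r) :
    #{x ∈ switchings H ei | Blocked H ei x} ≤
      r * (r - 1) * (Mk n k * (8 * (r * kmax n k) + 3 * kmax n k ^ 2)) := by
  have h₁ := card_filter_switchings_le_of_forall_first hu hdeg hei
    (P := fun x => Clash H ei x.1 x.2.1 x.2.2)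
    fun z _ j _ => card_filter_clash_le hu hdeg hei (by omega) z j
  have h₂ := card_filter_switchings_le_of_forall_second hu hdeg hei
    (P := fun x => Clash H ei x.1.swap x.2.2 x.2.1)
    fun z _ i _ => card_filter_clash_le hu hdeg hei (by omega) z.swap i
  have h₃ := card_filter_switchings_le_of_forall_second hu hdeg hei
    (P := fun x => ei.val - {x.1.1, x.1.2} + {x.2.1.1, x.2.2.1} ∈ H.val.map Finset.val)
    fun z _ i _ => card_filter_exchange_mem_edges_le hdeg (hu ei hei ▸ hr) z.1 z.2 i.1
  calc #{x ∈ switchings H ei | Blocked H ei x}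
      ≤ r * (r - 1) * (Mk n k * (4 * (r * kmax n k) + kmax n k ^ 2)) +
          (r * (r - 1) * (Mk n k * (4 * (r * kmax n k) + kmax n k ^ 2)) +
            r * (r - 1) * (Mk n k * kmax n k ^ 2)) := by
        unfold Blocked
        exact (card_filter_or_le _ _ _).trans
          (add_le_add h₁ ((card_filter_or_le _ _ _).trans (add_le_add h₂ h₃)))
    _ = r * (r - 1) * (Mk n k * (8 * (r * kmax n k) + 3 * kmax n k ^ 2)) := by ring

end Switchings

section Legality

variable {n r : ℕ} {H : Finset (Finset (Fin n))} {ei f₁ f₂ : Finset (Fin n)}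
  {z₁ z₂ y₁ y₂ : Fin n} {k : Fin n → ℕ}

theorem mem_switchings_of_sstarMem (h : SstarMem n H ei f₁ f₂ z₁ z₂ y₁ y₂) :
    ((z₁, z₂), (y₁, f₁), (y₂, f₂)) ∈ switchings H ei := by
  obtain ⟨hz, -, -, -, -, -, hf₁, hf₂, -, -, -, hz₁, hz₂, hy₁, hy₂⟩ := h
  simp [switchings, *]

theorem sstarMem_of_not_blocked (hx : ((z₁, z₂), (y₁, f₁), (y₂, f₂)) ∈ switchings H ei)
    (hb : ¬Blocked H ei ((z₁, z₂), (y₁, f₁), (y₂, f₂))) :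
    SstarMem n H ei f₁ f₂ z₁ z₂ y₁ y₂ := by
  simp only [switchings, mem_product, mem_offDiag, mem_incidences] at hx
  simp only [Blocked, Clash, Prod.swap, not_or] at hb
  obtain ⟨⟨hz₁, hz₂, hz⟩, ⟨hf₁, hy₁⟩, hf₂, hy₂⟩ := hx
  refine ⟨hz, ?_, ?_, ?_, ?_, ?_, hf₁, hf₂, ?_, ?_, ?_, hz₁, hz₂, hy₁, hy₂⟩ <;>
    rintro rfl <;> tauto

theorem fwdLegal_of_not_blocked (hx : ((z₁, z₂), (y₁, f₁), (y₂, f₂)) ∈ switchings H ei)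
    (hb : ¬Blocked H ei ((z₁, z₂), (y₁, f₁), (y₂, f₂))) :
    fwdLegal n H ei f₁ f₂ z₁ z₂ y₁ y₂ := by
  obtain ⟨hz, hz₁y₁, hz₁y₂, hz₂y₁, hz₂y₂, hy, -, -, -, -, -, hz₁, hz₂, hy₁, hy₂⟩ :=
    sstarMem_of_not_blocked hx hb
  simp only [Blocked, Clash, Prod.swap, not_or] at hb
  obtain ⟨⟨hy₁e, hz₁f₁, hz₂f₁, hy₂f₁, hg₁⟩, ⟨hy₂e, hz₂f₂, hz₁f₂, hy₁f₂, hg₂⟩, hg⟩ := hb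
  set g := ei.val - {z₁, z₂} + {y₁, y₂}
  set g₁ := f₁.val - {y₁} + {z₁}
  set g₂ := f₂.val - {y₂} + {z₂}
  have mem_g (a) : a ∈ g ↔ (a ∈ ei ∧ ¬(a = z₁ ∨ a = z₂)) ∨ a = y₁ ∨ a = y₂ := by
    simp only [g, Multiset.mem_add, mem_val_sub, Multiset.insert_eq_cons, Multiset.mem_cons,
      Multiset.mem_singleton]
  have mem_g₁ (a) : a ∈ g₁ ↔ (a ∈ f₁ ∧ a ≠ y₁) ∨ a = z₁ := by
    simp only [g₁, Multiset.mem_add, mem_val_sub, Multiset.mem_singleton]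
  have mem_g₂ (a) : a ∈ g₂ ↔ (a ∈ f₂ ∧ a ≠ y₂) ∨ a = z₂ := by
    simp only [g₂, Multiset.mem_add, mem_val_sub, Multiset.mem_singleton]
  have hgg₁ : g ≠ g₁ := fun h => by have := mem_g y₂; rw [h, mem_g₁] at this; tauto
  have hgg₂ : g ≠ g₂ := fun h => by have := mem_g y₁; rw [h, mem_g₂] at this; tauto
  have hg₁g₂ : g₁ ≠ g₂ := fun h => by have := mem_g₁ z₁; rw [h, mem_g₂] at this; tauto
  have heg : ei.val ≠ g := fun h => by have := mem_g y₁; rw [← h] at this; tauto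
  have heg₁ : ei.val ≠ g₁ := fun h => by have := mem_g₁ z₂; rw [← h] at this; tauto
  have heg₂ : ei.val ≠ g₂ := fun h => by have := mem_g₂ z₁; rw [← h] at this; tauto
  have hE : (H.val.map Finset.val).Nodup := H.nodup.map val_injective
  have mem_new (m) : m ∈ ({g, g₁, g₂} : Multiset (Multiset (Fin n))) ↔ m = g ∨ m = g₁ ∨ m = g₂ := by
    simp only [Multiset.insert_eq_cons, Multiset.mem_cons, Multiset.mem_singleton]
  have hnew : ({g, g₁, g₂} : Multiset (Multiset (Fin n))).Nodup := by
    simp only [Multiset.insert_eq_cons, Multiset.nodup_cons, Multiset.mem_cons,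
      Multiset.mem_singleton, Multiset.nodup_singleton, not_or]
    exact ⟨⟨hgg₁, hgg₂⟩, hg₁g₂, trivial⟩
  refine ⟨Multiset.nodup_sub_add _ hE hnew fun m hm => ?_, fun m hm => ?_, fun h => ?_⟩
  · rcases (mem_new m).1 hm with rfl | rfl | rfl <;> assumption
  · rcases Multiset.mem_add.1 hm with hm | hm
    · obtain ⟨e, -, rfl⟩ := Multiset.mem_map.1 (Multiset.mem_of_le (Multiset.sub_le_self _ _) hm)
      exact e.nodup
    rcases (mem_new m).1 hm with rfl | rfl | rfl
    · exact Multiset.nodup_sub_add _ ei.nodup (by simpa using hy) (by simp [hy₁e, hy₂e])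
    · exact Multiset.nodup_sub_add _ f₁.nodup (Multiset.nodup_singleton _) (by simpa)
    · exact Multiset.nodup_sub_add _ f₂.nodup (Multiset.nodup_singleton _) (by simpa)
  · rcases Multiset.mem_add.1 h with h | h
    · exact ((Multiset.mem_sub_of_nodup hE).1 h).2 (by simp)
    · rcases (mem_new _).1 h with h | h | h <;> contradiction

def legalSwitchings (H : Finset (Finset (Fin n))) (ei : Finset (Fin n)) :
    Set ((Fin n × Fin n) × (Fin n × Finset (Fin n)) × (Fin n × Finset (Fin n))) :=
  {x | SstarMem n H ei x.2.1.2 x.2.2.2 x.1.1 x.1.2 x.2.1.1 x.2.2.1 ∧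
    fwdLegal n H ei x.2.1.2 x.2.2.2 x.1.1 x.1.2 x.2.1.1 x.2.2.1}

def tupleEquiv (n : ℕ) :
    (Fin n × Fin n) × (Fin n × Finset (Fin n)) × (Fin n × Finset (Fin n)) ≃
      Fin n × Fin n × Fin n × Fin n × Finset (Fin n) × Finset (Fin n) where
  toFun x := (x.1.1, x.1.2, x.2.1.1, x.2.2.1, x.2.1.2, x.2.2.2)
  invFun p := ((p.1, p.2.1), (p.2.2.1, p.2.2.2.2.1), (p.2.2.2.1, p.2.2.2.2.2))
  left_inv _ := rfl
  right_inv _ := rfl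

theorem ncard_legal_eq :
    {p ∈ Sstar n H ei | fwdLegal n H ei p.2.2.2.2.1 p.2.2.2.2.2 p.1 p.2.1 p.2.2.1 p.2.2.2.1}.ncard =
      (legalSwitchings H ei).ncard :=
  (Set.ncard_preimage_of_injective_subset_range (tupleEquiv n).injective
    (by simp [(tupleEquiv n).range_eq_univ])).symm

theorem ncard_legalSwitchings_le (hu : isUniform n r H) (hdeg : ∀ v, hDeg n H v = k v)
    (hei : ei ∈ H) : (legalSwitchings H ei).ncard ≤ r * (r - 1) * Mk n k ^ 2 := by
  rw [← card_switchings hu hdeg hei, ← Set.ncard_coe_finset]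
  exact Set.ncard_le_ncard (fun _ hx => mem_switchings_of_sstarMem hx.1) (Set.toFinite _)

theorem le_ncard_legalSwitchings_add (hu : isUniform n r H) (hdeg : ∀ v, hDeg n H v = k v)
    (hei : ei ∈ H) (hr : 3 ≤ r) :
    r * (r - 1) * Mk n k ^ 2 ≤ (legalSwitchings H ei).ncard +
      r * (r - 1) * (Mk n k * (8 * (r * kmax n k) + 3 * kmax n k ^ 2)) := by
  rw [← card_switchings hu hdeg hei, ← card_filter_add_card_filter_not (Blocked H ei), add_comm]
  refine add_le_add ?_ (card_filter_blocked_le hu hdeg hei hr)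
  rw [← Set.ncard_coe_finset]
  refine Set.ncard_le_ncard (fun x hx => ?_) (Set.toFinite _)
  obtain ⟨hx, hb⟩ := mem_filter.1 hx
  exact ⟨sstarMem_of_not_blocked hx hb, fwdLegal_of_not_blocked hx hb⟩

end Legality

theorem abs_sub_le_of_le_of_le_add {N r M K : ℝ} (hr : 0 ≤ r * (r - 1)) (hM : 0 ≤ M)
    (hN : N ≤ r * (r - 1) * M ^ 2)
    (hN' : r * (r - 1) * M ^ 2 ≤ N + r * (r - 1) * (M * (8 * (r * K) + 3 * K ^ 2))) :
    |N - r * (r - 1) * M ^ 2| ≤ 8 * (r * (r - 1) * M ^ 2) * (K ^ 2 + r * K) / M := by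
  rw [abs_sub_comm, abs_of_nonneg (by linarith)]
  rcases hM.eq_or_lt with rfl | hM
  · simp_all
  rw [le_div_iff₀ hM]
  have : 0 ≤ r * (r - 1) * M ^ 2 * K ^ 2 := by positivity
  calc (r * (r - 1) * M ^ 2 - N) * M ≤ r * (r - 1) * (M * (8 * (r * K) + 3 * K ^ 2)) * M := by
        gcongr; linarith
    _ ≤ 8 * (r * (r - 1) * M ^ 2) * (K ^ 2 + r * K) := by nlinarith

theorem stmt7 :
    ∃ C : ℝ, 0 < C ∧ ∃ δ : ℝ, 0 < δ ∧
      ∀ (n r : ℕ) (k : Fin n → ℕ) (Gs : Finset (Finset (Fin n))) (ei : Finset (Fin n)),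
        3 ≤ n → 3 ≤ r → isUniform n r Gs → (∀ v, hDeg n Gs v = k v) → ei ∈ Gs →
        (r : ℝ) ^ 4 * (kmax n k : ℝ) ^ 3 ≤ δ * (Mk n k : ℝ) →
        |(({p ∈ Sstar n Gs ei |
              fwdLegal n Gs ei p.2.2.2.2.1 p.2.2.2.2.2 p.1 p.2.1 p.2.2.1 p.2.2.2.1}).ncard : ℝ)
            - (r : ℝ) * ((r : ℝ) - 1) * (Mk n k : ℝ) ^ 2| ≤
          C * ((r : ℝ) * ((r : ℝ) - 1) * (Mk n k : ℝ) ^ 2) *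
            ((kmax n k : ℝ) ^ 2 + (r : ℝ) * (kmax n k : ℝ)) / (Mk n k : ℝ) := by
  refine ⟨8, by norm_num, 1, one_pos, fun n r k Gs ei _ hr hu hdeg hei _ => ?_⟩
  have hr₁ : ((r - 1 : ℕ) : ℝ) = r - 1 := Nat.cast_pred (by omega)
  have hle := ncard_legalSwitchings_le hu hdeg hei
  have hge := le_ncard_legalSwitchings_add hu hdeg hei hr
  rw [ncard_legal_eq]
  refine abs_sub_le_of_le_of_le_add ?_ (Nat.cast_nonneg _) ?_ ?_
  · have : (3 : ℝ) ≤ r := by exact_mod_cast hr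
    nlinarith
  · rw [← hr₁]; exact_mod_cast hle
  · rw [← hr₁]; exact_mod_cast hge
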